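/- Let k ≥ 1, let w ∈ ℝⁿ be a weight vector with w_i > 0 and max_i w_i = 1, let H₀ be a set of k indices carrying k largest weights of w, let L ≥ 1 be an integer with k + L ≤ n, and let H₁ be a set of L indices carrying L smallest weights of w (disjoint from H₀). (i) If L ≥ k and ‖w_{H₀}‖₁ < ‖w_{H₁}‖₁, then sup{ ‖z_{Tᶜ}‖_Σ²/‖z_T‖₂² : z ∈ ℝⁿ, z ≠ 0, ‖z_{H₀}‖_w = ‖z_{H₀ᶜ}‖_w, |supp(z)| = k+L } ≥ (L²/k) / ( k·‖w_{H₁}‖₁²/‖w_{H₀}‖₁² ) = L²‖w_{H₀}‖₁² / (k²‖w_{H₁}‖₁²). (ii) If L ≤ k, then sup{ ‖z_{Tᶜ}‖_Σ²/‖z_T‖₂² : z ∈ ℝⁿ, z ≠ 0, ‖z_{H₀}‖_w ≥ ‖z_{H₀ᶜ}‖_w, supp(z) ⊆ H₀ ∪ H₁ } ≥ L/k. -/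

import Mathlib

/-! The atomic norm is squeezed between norms: `‖v‖₂ ≤ ‖v‖_Σ ≤ ‖v‖₁` and `‖v‖₁ ≤ √k ‖v‖_Σ`,
the last because a unit `k`-sparse atom has `ℓ¹`-norm at most `√k` (Cauchy–Schwarz). Comparing the
tail with the smallest of the `k` top entries, `‖v‖_Σ ≤ ‖v‖₁` bounds the ratio, so the suprema are
taken over bounded sets and it suffices to exhibit one admissible vector for each part.

For (i) take the vector equal to `‖w_{H₁}‖₁` on `H₀` and to `‖w_{H₀}‖₁` on `H₁`: it balances the
two weighted norms, its top-`k` set is `H₀`, and `‖v‖₁ ≤ √k ‖v‖_Σ` gives the bound. For (ii) take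
the indicator of `H₀ ∪ H₁`: as `L ≤ k` and `H₀` carries the largest weights it satisfies the weighted
constraint, its top-`k` set lies inside `H₀ ∪ H₁`, so `‖z_{Tᶜ}‖₂² / ‖z_T‖₂² = L / k`, and
`‖v‖₂ ≤ ‖v‖_Σ` concludes. -/

open scoped BigOperators ENNReal RealInnerProductSpace
open MeasureTheory Metric

noncomputable section

/-- The set of `k`-sparse vectors of `ℝⁿ`. -/
def sparseVecs (n k : ℕ) : Set (EuclideanSpace ℝ (Fin n)) :=
  {x | ∃ s : Finset (Fin n), s.card ≤ k ∧ ∀ i ∉ s, x i = 0}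

/-- Descent set (collection of descent vectors) of `R` at `x`. -/
def descentCone {n : ℕ} (R : EuclideanSpace ℝ (Fin n) → ℝ) (x : EuclideanSpace ℝ (Fin n)) :
    Set (EuclideanSpace ℝ (Fin n)) := {z | R (x + z) ≤ R x}

/-- Descent vectors of `R` at the model set `S`. -/
def descentConeSet {n : ℕ} (R : EuclideanSpace ℝ (Fin n) → ℝ)
    (S : Set (EuclideanSpace ℝ (Fin n))) : Set (EuclideanSpace ℝ (Fin n)) :=
  ⋃ x ∈ S, descentCone R x

/-- Weighted ℓ¹-norm `‖z‖_w = ∑ i, w i * |z i|`. -/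
def wNorm {n : ℕ} (w : Fin n → ℝ) (z : EuclideanSpace ℝ (Fin n)) : ℝ := ∑ i, w i * |z i|

/-- Restriction of a vector to a set of coordinates (`z_S`). -/
def coordRestrict {n : ℕ} (z : EuclideanSpace ℝ (Fin n)) (S : Finset (Fin n)) :
    EuclideanSpace ℝ (Fin n) := WithLp.toLp 2 (fun i => if i ∈ S then z i else 0)

/-- Atomic norm `‖·‖_Σ` generated by the `k`-sparse unit vectors. -/
def atomNormSigma (n k : ℕ) (z : EuclideanSpace ℝ (Fin n)) : ℝ :=
  gauge (convexHull ℝ {u : EuclideanSpace ℝ (Fin n) | u ∈ sparseVecs n k ∧ ‖u‖ = 1}) z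

open Finset
open scoped Pointwise

lemma Seminorm.le_mul_gauge_of_le {E : Type*} [AddCommGroup E] [Module ℝ E] (p : Seminorm ℝ E)
    {s : Set E} {c : ℝ} (hc : 0 < c) (hs : ∀ y ∈ s, p y ≤ c) {x : E}
    (hx : ∃ r : ℝ, 0 < r ∧ x ∈ r • s) : p x ≤ c * gauge s x := by
  obtain ⟨r, hr, hxr⟩ := hx
  rw [← div_le_iff₀' hc, gauge_def]
  refine le_csInf ⟨r, Set.mem_Ioi.2 hr, hxr⟩ ?_
  rintro r ⟨hr, y, hy, rfl⟩
  rw [div_le_iff₀' hc, map_smul_eq_mul, Real.norm_of_nonneg (le_of_lt hr), mul_comm c]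
  exact mul_le_mul_of_nonneg_left (hs y hy) (le_of_lt hr)

variable {n k : ℕ}

def l1Seminorm (n : ℕ) : Seminorm ℝ (EuclideanSpace ℝ (Fin n)) :=
  Seminorm.of (fun x => ∑ i, |x i|)
    (fun x y => by
      simpa only [PiLp.add_apply, ← sum_add_distrib] using
        sum_le_sum fun i _ => abs_add_le (x i) (y i))
    (fun a x => by simp [mul_sum, abs_mul])

lemma l1Seminorm_apply (x : EuclideanSpace ℝ (Fin n)) : l1Seminorm n x = ∑ i, |x i| := rfl

lemma l1Seminorm_pos {x : EuclideanSpace ℝ (Fin n)} (hx : x ≠ 0) : 0 < l1Seminorm n x := by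
  obtain ⟨i, hi⟩ : ∃ i, x i ≠ 0 := by
    by_contra! h
    exact hx (PiLp.ext h)
  exact sum_pos' (fun j _ => abs_nonneg _) ⟨i, mem_univ i, abs_pos.2 hi⟩

lemma l1Seminorm_le_sqrt_card_mul_norm {x : EuclideanSpace ℝ (Fin n)} {s : Finset (Fin n)}
    (hx : ∀ i ∉ s, x i = 0) : l1Seminorm n x ≤ √(#s) * ‖x‖ := by
  have hsupp : ∀ f : ℝ → ℝ, f 0 = 0 → ∑ i, f (x i) = ∑ i ∈ s, f (x i) := fun f hf =>
    (sum_subset (subset_univ s) fun i _ hi => by rw [hx i hi, hf]).symm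
  rw [l1Seminorm_apply, EuclideanSpace.norm_eq, ← Real.sqrt_mul (Nat.cast_nonneg _),
    Real.le_sqrt (sum_nonneg fun i _ => abs_nonneg _) (by positivity)]
  simp only [Real.norm_eq_abs, sq_abs]
  rw [hsupp _ abs_zero, hsupp (· ^ 2) (by simp)]
  simpa only [sq_abs] using sq_sum_le_card_mul_sum_sq (s := s) (f := fun i => |x i|)

def sparseAtoms (n k : ℕ) : Set (EuclideanSpace ℝ (Fin n)) := {u | u ∈ sparseVecs n k ∧ ‖u‖ = 1}

lemma atomNormSigma_eq_gauge : atomNormSigma n k = gauge (convexHull ℝ (sparseAtoms n k)) := rfl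

lemma single_mem_sparseAtoms (hk : 1 ≤ k) (i : Fin n) {a : ℝ} (ha : |a| = 1) :
    EuclideanSpace.single i a ∈ sparseAtoms n k := by
  refine ⟨⟨{i}, by simpa using hk, fun j hj => ?_⟩, by simpa using ha⟩
  simp [Ne.symm (Finset.notMem_singleton.1 hj)]

lemma mem_l1Seminorm_smul_convexHull_sparseAtoms (hk : 1 ≤ k) {v : EuclideanSpace ℝ (Fin n)}
    (hv : v ≠ 0) : v ∈ l1Seminorm n v • convexHull ℝ (sparseAtoms n k) := by
  set σ : Fin n → ℝ := fun i => if v i < 0 then -1 else 1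
  have hσ : ∀ i, |v i| * σ i = v i := fun i => by
    by_cases h : v i < 0 <;> simp [σ, h, abs_of_neg, abs_of_nonneg, le_of_not_gt]
  refine ⟨univ.centerMass (fun i => |v i|) (fun i => EuclideanSpace.single i (σ i)),
    univ.centerMass_mem_convexHull (fun i _ => abs_nonneg _) (l1Seminorm_pos hv) fun i _ =>
      single_mem_sparseAtoms hk i (by by_cases h : v i < 0 <;> simp [σ, h]), ?_⟩
  dsimp only
  rw [centerMass, ← l1Seminorm_apply, smul_inv_smul₀ (l1Seminorm_pos hv).ne']
  ext j
  simp [Pi.single_apply, hσ]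

lemma atomNormSigma_le_l1Seminorm (hk : 1 ≤ k) (v : EuclideanSpace ℝ (Fin n)) :
    atomNormSigma n k v ≤ l1Seminorm n v := by
  rcases eq_or_ne v 0 with rfl | hv
  · simp [atomNormSigma_eq_gauge]
  · exact gauge_le_of_mem (apply_nonneg _ _) (mem_l1Seminorm_smul_convexHull_sparseAtoms hk hv)

lemma Seminorm.le_mul_atomNormSigma (hk : 1 ≤ k) (p : Seminorm ℝ (EuclideanSpace ℝ (Fin n)))
    {c : ℝ} (hc : 0 < c) (hp : ∀ u ∈ sparseAtoms n k, p u ≤ c) (v : EuclideanSpace ℝ (Fin n)) :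
    p v ≤ c * atomNormSigma n k v := by
  rcases eq_or_ne v 0 with rfl | hv
  · simp [atomNormSigma_eq_gauge]
  · rw [atomNormSigma_eq_gauge]
    refine p.le_mul_gauge_of_le hc (fun y hy => ?_) ⟨_, l1Seminorm_pos hv,
      mem_l1Seminorm_smul_convexHull_sparseAtoms hk hv⟩
    simpa using convexHull_min (t := p.closedBall 0 c) (fun u hu => by simpa using hp u hu)
      (p.convex_closedBall 0 c) hy

lemma norm_le_atomNormSigma (hk : 1 ≤ k) (v : EuclideanSpace ℝ (Fin n)) :
    ‖v‖ ≤ atomNormSigma n k v := by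
  simpa using (normSeminorm ℝ _).le_mul_atomNormSigma hk one_pos (fun u hu => hu.2.le) v

lemma l1Seminorm_le_sqrt_mul_atomNormSigma (hk : 1 ≤ k) (v : EuclideanSpace ℝ (Fin n)) :
    l1Seminorm n v ≤ √k * atomNormSigma n k v := by
  refine (l1Seminorm n).le_mul_atomNormSigma hk (by positivity) (fun u ⟨⟨s, hs, hu⟩, hu1⟩ => ?_) v
  calc l1Seminorm n u ≤ √(#s) * ‖u‖ := l1Seminorm_le_sqrt_card_mul_norm hu
    _ ≤ √k := by rw [hu1, mul_one]; exact Real.sqrt_le_sqrt (by exact_mod_cast hs)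

lemma coordRestrict_apply (z : EuclideanSpace ℝ (Fin n)) (S : Finset (Fin n)) (i : Fin n) :
    coordRestrict z S i = if i ∈ S then z i else 0 := rfl

lemma sum_apply_coordRestrict (z : EuclideanSpace ℝ (Fin n)) (S : Finset (Fin n))
    (g : Fin n → ℝ → ℝ) (hg : ∀ i, g i 0 = 0) :
    ∑ i, g i (coordRestrict z S i) = ∑ i ∈ S, g i (z i) := by
  simp only [coordRestrict_apply, apply_ite (g _), hg, sum_ite_mem, univ_inter]

lemma wNorm_coordRestrict (w : Fin n → ℝ) (z : EuclideanSpace ℝ (Fin n)) (S : Finset (Fin n)) :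
    wNorm w (coordRestrict z S) = ∑ i ∈ S, w i * |z i| :=
  sum_apply_coordRestrict z S (fun i x => w i * |x|) (by simp)

lemma l1Seminorm_coordRestrict (z : EuclideanSpace ℝ (Fin n)) (S : Finset (Fin n)) :
    l1Seminorm n (coordRestrict z S) = ∑ i ∈ S, |z i| :=
  sum_apply_coordRestrict z S (fun _ x => |x|) (by simp)

lemma norm_sq_eq_sum_sq (z : EuclideanSpace ℝ (Fin n)) : ‖z‖ ^ 2 = ∑ i, z i ^ 2 := by
  simp [EuclideanSpace.norm_sq_eq]

lemma norm_coordRestrict_sq (z : EuclideanSpace ℝ (Fin n)) (S : Finset (Fin n)) :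
    ‖coordRestrict z S‖ ^ 2 = ∑ i ∈ S, z i ^ 2 := by
  rw [norm_sq_eq_sum_sq]
  exact sum_apply_coordRestrict z S (fun _ x => x ^ 2) (by simp)

def coordSupport (z : EuclideanSpace ℝ (Fin n)) : Finset (Fin n) := univ.filter fun i => z i ≠ 0

def IsTopSet (z : EuclideanSpace ℝ (Fin n)) (S : Finset (Fin n)) : Prop :=
  ∀ i ∈ S, ∀ j ∉ S, |z j| ≤ |z i|

section IsTopSet

variable {z : EuclideanSpace ℝ (Fin n)} {S : Finset (Fin n)}

lemma IsTopSet.subset_coordSupport (hS : IsTopSet z S) (hcard : #S ≤ #(coordSupport z)) :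
    S ⊆ coordSupport z := by
  by_contra hsub
  obtain ⟨i, hiS, hi⟩ := not_subset.1 hsub
  have hzi : z i = 0 := by simpa [coordSupport] using hi
  have hsupp : coordSupport z ⊆ S := fun j hj => by
    by_contra hjS
    have hle := hS i hiS j hjS
    rw [hzi, abs_zero] at hle
    exact (mem_filter.1 hj).2 (abs_nonpos_iff.1 hle)
  exact hi (eq_of_subset_of_card_le hsupp hcard ▸ hiS)

lemma IsTopSet.eq_of_forall_lt {H : Finset (Fin n)} (hS : IsTopSet z S) (hcard : #S = #H)
    (hH : ∀ i ∈ H, ∀ j ∉ H, |z j| < |z i|) : S = H := by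
  have hHS : H ⊆ S := fun j hj => by
    by_contra hjS
    have hSH : S ⊆ H := fun i hiS => by
      by_contra hiH
      exact (hS i hiS j hjS).not_gt (hH j hj i hiH)
    exact (card_lt_card ((ssubset_iff_of_subset hSH).2 ⟨j, hj, hjS⟩)).ne hcard
  exact (eq_of_subset_of_card_le hHS hcard.le).symm

end IsTopSet

def tailRatio (k : ℕ) (z : EuclideanSpace ℝ (Fin n)) (S : Finset (Fin n)) : ℝ :=
  atomNormSigma n k (coordRestrict z Sᶜ) ^ 2 / ‖coordRestrict z S‖ ^ 2

lemma IsTopSet.tailRatio_le {z : EuclideanSpace ℝ (Fin n)} {S : Finset (Fin n)} (hk : 1 ≤ k)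
    (hS : IsTopSet z S) (hne : S.Nonempty) : tailRatio k z S ≤ (#Sᶜ : ℝ) ^ 2 / #S := by
  obtain ⟨i₀, hi₀, hmin⟩ := exists_min_image S (fun i => |z i|) hne
  set m := |z i₀|
  have hnum : atomNormSigma n k (coordRestrict z Sᶜ) ≤ #Sᶜ * m := by
    refine (atomNormSigma_le_l1Seminorm hk _).trans ?_
    rw [l1Seminorm_coordRestrict, ← nsmul_eq_mul]
    exact sum_le_card_nsmul _ _ _ fun j hj => hS i₀ hi₀ j (mem_compl.1 hj)
  have hden : #S * m ^ 2 ≤ ‖coordRestrict z S‖ ^ 2 := by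
    rw [norm_coordRestrict_sq, ← nsmul_eq_mul]
    exact card_nsmul_le_sum _ _ _ fun i hi => by
      simpa using pow_le_pow_left₀ (abs_nonneg _) (hmin i hi) 2
  rcases (show 0 ≤ m from abs_nonneg _).eq_or_lt with hm | hm
  · have hzero : atomNormSigma n k (coordRestrict z Sᶜ) = 0 :=
      le_antisymm (by simpa [← hm] using hnum) (gauge_nonneg _)
    rw [tailRatio, hzero, zero_pow two_ne_zero, zero_div]
    positivity
  · have hSpos : (0 : ℝ) < #S := by exact_mod_cast hne.card_pos
    calc tailRatio k z S ≤ (#Sᶜ * m) ^ 2 / (#S * m ^ 2) :=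
          div_le_div₀ (by positivity) (pow_le_pow_left₀ (gauge_nonneg _) hnum 2) (by positivity)
            hden
      _ = (#Sᶜ : ℝ) ^ 2 / #S := by field_simp [hm.ne']

lemma bddAbove_range_tailRatio (hk : 1 ≤ k) (T : EuclideanSpace ℝ (Fin n) → Finset (Fin n))
    (hT : ∀ z, #(T z) = k ∧ IsTopSet z (T z)) :
    BddAbove (Set.range fun z => tailRatio k z (T z)) := by
  refine ⟨((n - k : ℕ) : ℝ) ^ 2 / k, ?_⟩
  rintro _ ⟨z, rfl⟩
  obtain ⟨hcard, hz⟩ := hT z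
  simpa [card_compl, hcard] using hz.tailRatio_le hk (card_pos.1 (by omega))

lemma sq_l1_div_le_tailRatio (hk : 1 ≤ k) (z : EuclideanSpace ℝ (Fin n)) (S : Finset (Fin n)) :
    (∑ i ∈ Sᶜ, |z i|) ^ 2 / (k * ‖coordRestrict z S‖ ^ 2) ≤ tailRatio k z S := by
  have hkpos : (0 : ℝ) < k := by exact_mod_cast hk
  have hl1 := l1Seminorm_le_sqrt_mul_atomNormSigma hk (coordRestrict z Sᶜ)
  rw [l1Seminorm_coordRestrict] at hl1
  have hsq : (∑ i ∈ Sᶜ, |z i|) ^ 2 ≤ k * atomNormSigma n k (coordRestrict z Sᶜ) ^ 2 := by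
    calc (∑ i ∈ Sᶜ, |z i|) ^ 2 ≤ (√k * atomNormSigma n k (coordRestrict z Sᶜ)) ^ 2 :=
          pow_le_pow_left₀ (sum_nonneg fun i _ => abs_nonneg _) hl1 2
      _ = k * atomNormSigma n k (coordRestrict z Sᶜ) ^ 2 := by
          rw [mul_pow, Real.sq_sqrt hkpos.le]
  calc (∑ i ∈ Sᶜ, |z i|) ^ 2 / (k * ‖coordRestrict z S‖ ^ 2)
      ≤ k * atomNormSigma n k (coordRestrict z Sᶜ) ^ 2 / (k * ‖coordRestrict z S‖ ^ 2) :=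
        div_le_div_of_nonneg_right hsq (by positivity)
    _ = tailRatio k z S := mul_div_mul_left _ _ hkpos.ne'

lemma norm_sq_div_le_tailRatio (hk : 1 ≤ k) (z : EuclideanSpace ℝ (Fin n)) (S : Finset (Fin n)) :
    ‖coordRestrict z Sᶜ‖ ^ 2 / ‖coordRestrict z S‖ ^ 2 ≤ tailRatio k z S :=
  div_le_div_of_nonneg_right (pow_le_pow_left₀ (norm_nonneg _) (norm_le_atomNormSigma hk _) 2)
    (sq_nonneg _)

lemma sum_le_sum_of_card_le_of_forall_le {ι : Type*} {s t : Finset ι} {f : ι → ℝ}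
    (hf : ∀ j ∈ t, 0 ≤ f j) (hcard : #s ≤ #t) (hle : ∀ i ∈ s, ∀ j ∈ t, f i ≤ f j) :
    ∑ i ∈ s, f i ≤ ∑ j ∈ t, f j := by
  rcases t.eq_empty_or_nonempty with rfl | ht
  · simp [card_eq_zero.1 (Nat.le_zero.1 (by simpa using hcard))]
  obtain ⟨j₀, hj₀, hmin⟩ := exists_min_image t f ht
  calc ∑ i ∈ s, f i ≤ #s • f j₀ := sum_le_card_nsmul _ _ _ fun i hi => hle i hi j₀ hj₀
    _ ≤ #t • f j₀ := nsmul_le_nsmul_left (hf j₀ hj₀) hcard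
    _ ≤ ∑ j ∈ t, f j := card_nsmul_le_sum _ _ _ hmin

def twoLevel (H₀ H₁ : Finset (Fin n)) (a b : ℝ) : EuclideanSpace ℝ (Fin n) :=
  WithLp.toLp 2 fun i => if i ∈ H₀ then a else if i ∈ H₁ then b else 0

section twoLevel

variable {H₀ H₁ : Finset (Fin n)} {a b : ℝ} {i : Fin n}

lemma twoLevel_of_mem_left (hi : i ∈ H₀) : twoLevel H₀ H₁ a b i = a := if_pos hi

lemma twoLevel_of_mem_right (hd : Disjoint H₀ H₁) (hi : i ∈ H₁) : twoLevel H₀ H₁ a b i = b := by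
  simp [twoLevel, hi, disjoint_right.1 hd hi]

lemma twoLevel_of_notMem (h₀ : i ∉ H₀) (h₁ : i ∉ H₁) : twoLevel H₀ H₁ a b i = 0 := by
  simp [twoLevel, h₀, h₁]

lemma twoLevel_ne_zero (hi : i ∈ H₀) (ha : a ≠ 0) : twoLevel H₀ H₁ a b ≠ 0 :=
  ne_of_apply_ne (fun z => z i) (by simpa [twoLevel_of_mem_left hi] using ha)

lemma coordSupport_twoLevel (hd : Disjoint H₀ H₁) (ha : a ≠ 0) (hb : b ≠ 0) :
    coordSupport (twoLevel H₀ H₁ a b) = H₀ ∪ H₁ := by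
  ext i
  by_cases h₀ : i ∈ H₀
  · simp [coordSupport, h₀, twoLevel_of_mem_left h₀, ha]
  by_cases h₁ : i ∈ H₁
  · simp [coordSupport, h₁, twoLevel_of_mem_right hd h₁, hb]
  · simp [coordSupport, h₀, h₁, twoLevel_of_notMem h₀ h₁]

lemma sum_compl_twoLevel (hd : Disjoint H₀ H₁) (g : Fin n → ℝ → ℝ) (hg : ∀ i, g i 0 = 0) :
    ∑ i ∈ H₀ᶜ, g i (twoLevel H₀ H₁ a b i) = ∑ i ∈ H₁, g i b := by
  have hsub : H₁ ⊆ H₀ᶜ := fun i hi => mem_compl.2 (disjoint_right.1 hd hi)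
  rw [← sum_subset hsub fun i hi h₁ => by rw [twoLevel_of_notMem (mem_compl.1 hi) h₁, hg]]
  exact sum_congr rfl fun i hi => by rw [twoLevel_of_mem_right hd hi]

lemma sum_twoLevel_left (g : Fin n → ℝ → ℝ) :
    ∑ i ∈ H₀, g i (twoLevel H₀ H₁ a b i) = ∑ i ∈ H₀, g i a :=
  sum_congr rfl fun i hi => by rw [twoLevel_of_mem_left hi]

lemma wNorm_coordRestrict_twoLevel (w : Fin n → ℝ) :
    wNorm w (coordRestrict (twoLevel H₀ H₁ a b) H₀) = |a| * ∑ i ∈ H₀, w i := by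
  rw [wNorm_coordRestrict, sum_twoLevel_left (fun i x => w i * |x|), mul_sum]
  simp only [mul_comm]

lemma wNorm_coordRestrict_compl_twoLevel (hd : Disjoint H₀ H₁) (w : Fin n → ℝ) :
    wNorm w (coordRestrict (twoLevel H₀ H₁ a b) H₀ᶜ) = |b| * ∑ i ∈ H₁, w i := by
  rw [wNorm_coordRestrict, sum_compl_twoLevel hd (fun i x => w i * |x|) (by simp), mul_sum]
  simp only [mul_comm]

lemma le_tailRatio_twoLevel (hk : 1 ≤ k) (hd : Disjoint H₀ H₁) (hb : 0 ≤ b) (hba : b < a)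
    {S : Finset (Fin n)} (hS : IsTopSet (twoLevel H₀ H₁ a b) S) (hcard : #S = #H₀) :
    (#H₁ * b) ^ 2 / (k * (#H₀ * a ^ 2)) ≤ tailRatio k (twoLevel H₀ H₁ a b) S := by
  have ha := hb.trans_lt hba
  obtain rfl : S = H₀ := hS.eq_of_forall_lt hcard fun i hi j hj => by
    rw [twoLevel_of_mem_left hi, abs_of_pos ha]
    by_cases h₁ : j ∈ H₁
    · rwa [twoLevel_of_mem_right hd h₁, abs_of_nonneg hb]
    · rwa [twoLevel_of_notMem hj h₁, abs_zero]
  have hl1 : ∑ i ∈ Sᶜ, |twoLevel S H₁ a b i| = #H₁ * b := by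
    rw [sum_compl_twoLevel hd (fun _ x => |x|) (by simp)]
    simp [abs_of_nonneg hb]
  have hnorm : ‖coordRestrict (twoLevel S H₁ a b) S‖ ^ 2 = #S * a ^ 2 := by
    rw [norm_coordRestrict_sq, sum_twoLevel_left (fun _ x => x ^ 2)]
    simp
  simpa [hl1, hnorm] using sq_l1_div_le_tailRatio hk (twoLevel S H₁ a b) S

lemma card_div_card_le_tailRatio_twoLevel (hk : 1 ≤ k) (hd : Disjoint H₀ H₁) {S : Finset (Fin n)}
    (hS : IsTopSet (twoLevel H₀ H₁ 1 1) S) (hcard : #S = #H₀) :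
    (#H₁ : ℝ) / #H₀ ≤ tailRatio k (twoLevel H₀ H₁ 1 1) S := by
  set z := twoLevel H₀ H₁ 1 1
  have hU : coordSupport z = H₀ ∪ H₁ := coordSupport_twoLevel hd one_ne_zero one_ne_zero
  have hone : ∀ i ∈ H₀ ∪ H₁, z i = 1 := fun i hi => by
    rcases mem_union.1 hi with h | h
    exacts [twoLevel_of_mem_left h, twoLevel_of_mem_right hd h]
  have hSU : S ⊆ H₀ ∪ H₁ :=
    hU ▸ hS.subset_coordSupport (by rw [hU, card_union_of_disjoint hd]; omega)
  have hnormS : ‖coordRestrict z S‖ ^ 2 = #H₀ := by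
    rw [norm_coordRestrict_sq, sum_congr rfl fun i hi => by rw [hone i (hSU hi)]]
    simp [hcard]
  have hnorm : ‖z‖ ^ 2 = #H₀ + #H₁ := by
    rw [norm_sq_eq_sum_sq, ← sum_add_sum_compl H₀,
      sum_compl_twoLevel hd (fun _ x => x ^ 2) (by simp), sum_twoLevel_left (fun _ x => x ^ 2)]
    simp
  have hsplit : ‖coordRestrict z S‖ ^ 2 + ‖coordRestrict z Sᶜ‖ ^ 2 = ‖z‖ ^ 2 := by
    rw [norm_coordRestrict_sq, norm_coordRestrict_sq, norm_sq_eq_sum_sq, sum_add_sum_compl]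
  have hnormSc : ‖coordRestrict z Sᶜ‖ ^ 2 = #H₁ := by linarith
  simpa [hnormS, hnormSc] using norm_sq_div_le_tailRatio hk z S

end twoLevel

theorem DL_lower_bounds_general
    (n k L : ℕ) (hk : 1 ≤ k)
    (w : Fin n → ℝ) (hpos : ∀ i, 0 < w i)
    (T : EuclideanSpace ℝ (Fin n) → Finset (Fin n))
    (hT : ∀ z, (T z).card = k ∧ ∀ i ∈ T z, ∀ j ∉ T z, |z j| ≤ |z i|)
    (H₀ : Finset (Fin n)) (hH₀card : H₀.card = k)
    (hH₀ : ∀ i ∈ H₀, ∀ j ∉ H₀, w j ≤ w i)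
    (H₁ : Finset (Fin n)) (hH₁card : H₁.card = L)
    (hdisj : Disjoint H₀ H₁) :
    ((k ≤ L) → (∑ i ∈ H₀, w i < ∑ i ∈ H₁, w i) →
      ((L : ℝ) ^ 2 / k) / ((k : ℝ) * (∑ i ∈ H₁, w i) ^ 2 / (∑ i ∈ H₀, w i) ^ 2)
        ≤ sSup {r : ℝ | ∃ z : EuclideanSpace ℝ (Fin n), z ≠ 0 ∧
            wNorm w (coordRestrict z H₀) = wNorm w (coordRestrict z H₀ᶜ) ∧
            (Finset.univ.filter fun i => z i ≠ 0).card = k + L ∧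
            r = (atomNormSigma n k (coordRestrict z (T z)ᶜ)) ^ 2 / ‖coordRestrict z (T z)‖ ^ 2})
    ∧ ((L ≤ k) →
      (L : ℝ) / k
        ≤ sSup {r : ℝ | ∃ z : EuclideanSpace ℝ (Fin n), z ≠ 0 ∧
            wNorm w (coordRestrict z H₀ᶜ) ≤ wNorm w (coordRestrict z H₀) ∧
            (∀ i, z i ≠ 0 → i ∈ H₀ ∪ H₁) ∧
            r = (atomNormSigma n k (coordRestrict z (T z)ᶜ)) ^ 2 / ‖coordRestrict z (T z)‖ ^ 2}) := by
  have hbdd := bddAbove_range_tailRatio hk T hT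
  have hTcard : ∀ z, #(T z) = #H₀ := fun z => by rw [(hT z).1, hH₀card]
  obtain ⟨i₀, hi₀⟩ : H₀.Nonempty := card_pos.1 (by omega)
  have hA : 0 < ∑ i ∈ H₀, w i := sum_pos (fun i _ => hpos i) ⟨i₀, hi₀⟩
  refine ⟨fun _ hAB => ?_, fun hLk => ?_⟩
  · set A := ∑ i ∈ H₀, w i
    set B := ∑ i ∈ H₁, w i
    have hB := hA.trans hAB
    set z := twoLevel H₀ H₁ B A
    have hwz : wNorm w (coordRestrict z H₀) = wNorm w (coordRestrict z H₀ᶜ) := by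
      rw [wNorm_coordRestrict_twoLevel, wNorm_coordRestrict_compl_twoLevel hdisj, abs_of_pos hA,
        abs_of_pos hB, mul_comm]
    have hsupp : #(coordSupport z) = k + L := by
      rw [coordSupport_twoLevel hdisj hB.ne' hA.ne', card_union_of_disjoint hdisj, hH₀card,
        hH₁card]
    calc _ = (#H₁ * A) ^ 2 / (k * (#H₀ * B ^ 2)) := by
          rw [hH₀card, hH₁card]
          field_simp
      _ ≤ tailRatio k z (T z) := le_tailRatio_twoLevel hk hdisj hA.le hAB (hT z).2 (hTcard z)
      _ ≤ _ := by
          refine le_csSup (hbdd.mono ?_) ⟨z, twoLevel_ne_zero hi₀ hB.ne', hwz, hsupp, rfl⟩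
          rintro _ ⟨y, -, -, -, rfl⟩
          exact ⟨y, rfl⟩
  · set z := twoLevel H₀ H₁ 1 1
    have hwz : wNorm w (coordRestrict z H₀ᶜ) ≤ wNorm w (coordRestrict z H₀) := by
      rw [wNorm_coordRestrict_twoLevel, wNorm_coordRestrict_compl_twoLevel hdisj, abs_one,
        one_mul, one_mul]
      exact sum_le_sum_of_card_le_of_forall_le (fun j _ => (hpos j).le) (by omega)
        fun i hi j hj => hH₀ j hj i (disjoint_right.1 hdisj hi)
    have hsupp : ∀ i, z i ≠ 0 → i ∈ H₀ ∪ H₁ := fun i hi =>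
      coordSupport_twoLevel hdisj one_ne_zero one_ne_zero ▸ mem_filter.2 ⟨mem_univ i, hi⟩
    calc (L : ℝ) / k = #H₁ / #H₀ := by rw [hH₀card, hH₁card]
      _ ≤ tailRatio k z (T z) := card_div_card_le_tailRatio_twoLevel hk hdisj (hT z).2 (hTcard z)
      _ ≤ _ := by
          refine le_csSup (hbdd.mono ?_) ⟨z, twoLevel_ne_zero hi₀ one_ne_zero, hwz, hsupp, rfl⟩
          rintro _ ⟨y, -, -, -, rfl⟩
          exact ⟨y, rfl⟩

/-- Lemma 12 of the paper, lower bounds on the constrained suprema `D_L(R)` for a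
weighted ℓ¹-norm. `T` picks, for each `z`, `k` indices carrying the `k` largest absolute values
of coordinates of `z`; `H₀` carries `k` largest weights, `H₁` carries `L` smallest weights. -/
theorem DL_lower_bounds
    (n k L : ℕ) (hk : 1 ≤ k) (hL : 1 ≤ L) (hn : k + L ≤ n)
    (w : Fin n → ℝ) (hpos : ∀ i, 0 < w i) (hle : ∀ i, w i ≤ 1) (hmax : ∃ i, w i = 1)
    (T : EuclideanSpace ℝ (Fin n) → Finset (Fin n))
    (hT : ∀ z, (T z).card = k ∧ ∀ i ∈ T z, ∀ j ∉ T z, |z j| ≤ |z i|)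
    (H₀ : Finset (Fin n)) (hH₀card : H₀.card = k)
    (hH₀ : ∀ i ∈ H₀, ∀ j ∉ H₀, w j ≤ w i)
    (H₁ : Finset (Fin n)) (hH₁card : H₁.card = L)
    (hH₁ : ∀ i ∈ H₁, ∀ j ∉ H₁, w i ≤ w j)
    (hdisj : Disjoint H₀ H₁) :
    ((k ≤ L) → (∑ i ∈ H₀, w i < ∑ i ∈ H₁, w i) →
      ((L : ℝ) ^ 2 / k) / ((k : ℝ) * (∑ i ∈ H₁, w i) ^ 2 / (∑ i ∈ H₀, w i) ^ 2)
        ≤ sSup {r : ℝ | ∃ z : EuclideanSpace ℝ (Fin n), z ≠ 0 ∧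
            wNorm w (coordRestrict z H₀) = wNorm w (coordRestrict z H₀ᶜ) ∧
            (Finset.univ.filter fun i => z i ≠ 0).card = k + L ∧
            r = (atomNormSigma n k (coordRestrict z (T z)ᶜ)) ^ 2 / ‖coordRestrict z (T z)‖ ^ 2})
    ∧ ((L ≤ k) →
      (L : ℝ) / k
        ≤ sSup {r : ℝ | ∃ z : EuclideanSpace ℝ (Fin n), z ≠ 0 ∧
            wNorm w (coordRestrict z H₀ᶜ) ≤ wNorm w (coordRestrict z H₀) ∧
            (∀ i, z i ≠ 0 → i ∈ H₀ ∪ H₁) ∧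
            r = (atomNormSigma n k (coordRestrict z (T z)ᶜ)) ^ 2 / ‖coordRestrict z (T z)‖ ^ 2}) :=
  DL_lower_bounds_general n k L hk w hpos T hT H₀ hH₀card hH₀ H₁ hH₁card hdisj
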